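/- For every d ∈ (0,1) and every integer k ≥ 1, the WENO-PM_k mapping function is k times differentiable at ω = d with g⁽ʲ⁾(d) = 0 for all 1 ≤ j ≤ k (the one-sided derivatives of orders 1 through k of both branches vanish at d); moreover the one-sided derivatives at the endpoints satisfy g′(0) = 0 and g′(1) = 0. -/

import Mathlib

/-- The left branch (ω ≤ d) of the WENO-PMₖ mapping function. -/
noncomputable def gPML (d : ℝ) (k : ℕ) (ω : ℝ) : ℝ :=
  ((-1 : ℝ) ^ k * ((k : ℝ) + 1) / d ^ (k + 1)) * (ω - d) ^ (k + 1) * (ω + d / ((k : ℝ) + 1)) + d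

/-- The right branch (ω > d) of the WENO-PMₖ mapping function. -/
noncomputable def gPMR (d : ℝ) (k : ℕ) (ω : ℝ) : ℝ :=
  (-((k : ℝ) + 1) / (1 - d) ^ (k + 1)) * (ω - d) ^ (k + 1) *
    (ω + (d - ((k : ℝ) + 2)) / ((k : ℝ) + 1)) + d

/-- The WENO-PMₖ mapping function. -/
noncomputable def gPM (d : ℝ) (k : ℕ) (ω : ℝ) : ℝ :=
  if ω ≤ d then gPML d k ω else gPMR d k ω

/-!
The left and right branches have derivatives proportional to `ω (ω - d)^k` and
`(ω - 1) (ω - d)^k`: this gives `g′(0) = g′(1) = 0`, and since `(X - d)^k` divides both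
polynomials, the derivatives of orders `1, …, k` of both branches vanish at `d`.
The two branches differ by `(ω - d)^(k+1)` times a linear function, so `gPM` is the left
branch plus `max (ω - d) 0 ^ (k+1)` times that linear function; as `max x 0 ^ (k+1)` is `C^k`,
so is `gPM`, and its derivatives at `d` can be computed within `ω ≤ d`, where it is the left
branch.
-/

open Set Polynomial

theorem Polynomial.iteratedDeriv_eval {𝕜 : Type*} [NontriviallyNormedField 𝕜] (p : 𝕜[X])
    (n : ℕ) : iteratedDeriv n (fun x => p.eval x) = fun x => (derivative^[n] p).eval x := by
  induction n with
  | zero => rfl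
  | succ n ih =>
    rw [iteratedDeriv_succ, ih, Function.iterate_succ_apply']
    ext x
    exact Polynomial.deriv _

theorem Polynomial.iteratedDeriv_eval_eq_zero_of_pow_dvd {𝕜 : Type*}
    [NontriviallyNormedField 𝕜] {p : 𝕜[X]} {a : 𝕜} {m n : ℕ} (hp : (X - C a) ^ m ∣ p) (hn : n < m) :
    iteratedDeriv n (fun x => p.eval x) a = 0 := by
  rw [iteratedDeriv_eval, ← IsRoot, ← dvd_iff_isRoot]
  exact (dvd_pow_self _ (Nat.sub_ne_zero_of_lt hn)).trans
    (pow_sub_dvd_iterate_derivative_of_pow_dvd n hp)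

theorem iteratedDeriv_eq_zero_of_deriv_eq_eval {𝕜 : Type*} [NontriviallyNormedField 𝕜]
    {f : 𝕜 → 𝕜} {p : 𝕜[X]} {a : 𝕜} {m n : ℕ} (hf : deriv f = fun x => p.eval x)
    (hp : (X - C a) ^ m ∣ p) (hn : 1 ≤ n) (hnm : n ≤ m) : iteratedDeriv n f a = 0 := by
  obtain ⟨n, rfl⟩ := Nat.exists_eq_add_of_le' hn
  rw [iteratedDeriv_succ', hf]
  exact iteratedDeriv_eval_eq_zero_of_pow_dvd hp (by omega)

theorem iteratedDeriv_eq_of_eqOn {𝕜 F : Type*} [NontriviallyNormedField 𝕜]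
    [NormedAddCommGroup F] [NormedSpace 𝕜 F] {f g : 𝕜 → F} {s : Set 𝕜} {a : 𝕜} {n : ℕ}
    (hs : UniqueDiffOn 𝕜 s) (ha : a ∈ s) (hf : ContDiffAt 𝕜 n f a) (hg : ContDiffAt 𝕜 n g a)
    (hfg : EqOn f g s) :
    iteratedDeriv n f a = iteratedDeriv n g a := by
  rw [← iteratedDerivWithin_eq_iteratedDeriv hs hf ha,
    ← iteratedDerivWithin_eq_iteratedDeriv hs hg ha, iteratedDerivWithin_congr hfg ha]

theorem hasDerivAt_max_zero_pow {n : ℕ} (hn : n ≠ 0) (x : ℝ) :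
    HasDerivAt (fun y : ℝ => max y 0 ^ (n + 1)) ((n + 1) * max x 0 ^ n) x := by
  have hleft : ∀ x ≤ 0, HasDerivWithinAt (fun y : ℝ => max y 0 ^ (n + 1))
      ((n + 1) * max x 0 ^ n) (Iic 0) x := fun x hx => by
    refine ((hasDerivWithinAt_const x _ 0).congr (fun y hy => ?_) ?_).congr_deriv ?_ <;>
      simp_all
  have hright : ∀ x ≥ 0, HasDerivWithinAt (fun y : ℝ => max y 0 ^ (n + 1))
      ((n + 1) * max x 0 ^ n) (Ici 0) x := fun x hx => by
    refine ((hasDerivAt_pow (n + 1) x).hasDerivWithinAt.congr (fun y hy => ?_) ?_).congr_deriv ?_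
      <;> simp_all
  rcases lt_trichotomy x 0 with hx | rfl | hx
  · exact (hleft x hx.le).hasDerivAt (Iic_mem_nhds hx)
  · simpa using (hleft 0 le_rfl).union (hright 0 le_rfl)
  · exact (hright x hx.le).hasDerivAt (Ici_mem_nhds hx)

theorem contDiff_max_zero_pow (n : ℕ) : ContDiff ℝ n (fun x : ℝ => max x 0 ^ (n + 1)) := by
  induction n with
  | zero => exact contDiff_zero.mpr (by fun_prop)
  | succ n ih =>
    rw [Nat.cast_succ, contDiff_succ_iff_deriv]
    have hderiv := fun x => hasDerivAt_max_zero_pow n.succ_ne_zero x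
    refine ⟨fun x => (hderiv x).differentiableAt, by simp, ?_⟩
    rw [funext fun x => (hderiv x).deriv]
    exact contDiff_const.mul ih

theorem contDiff_ite_le_of_eq_add_sub_pow_mul {n : ℕ} {a : ℝ} {f g h : ℝ → ℝ}
    (hf : ContDiff ℝ n f) (hh : ContDiff ℝ n h)
    (hgf : ∀ x, g x = f x + (x - a) ^ (n + 1) * h x) :
    ContDiff ℝ n (fun x => if x ≤ a then f x else g x) := by
  have hsplit : (fun x => if x ≤ a then f x else g x) =
      fun x => f x + max (x - a) 0 ^ (n + 1) * h x := by
    funext x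
    split_ifs with hx
    · simp [max_eq_right (sub_nonpos.mpr hx)]
    · rw [hgf, max_eq_left (by linarith [not_le.mp hx])]
  rw [hsplit]
  exact hf.add (((contDiff_max_zero_pow n).comp (contDiff_id.sub contDiff_const)).mul hh)

theorem hasDerivAt_mul_sub_pow_succ_mul_add_add (c a e b : ℝ) (k : ℕ) (ω : ℝ) :
    HasDerivAt (fun x => c * (x - a) ^ (k + 1) * (x + e) + b)
      (c * (ω - a) ^ k * ((k + 1) * (ω + e) + (ω - a))) ω := by
  have hpow : HasDerivAt (fun x => (x - a) ^ (k + 1)) ((k + 1) * (ω - a) ^ k) ω := by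
    simpa using (hasDerivAt_pow (k + 1) (ω - a)).comp_sub_const ω a
  exact (((hpow.const_mul c).fun_mul ((hasDerivAt_id' ω).add_const e)).add_const b).congr_deriv
    (by ring)

theorem hasDerivAt_gPML (d : ℝ) (k : ℕ) (ω : ℝ) :
    HasDerivAt (gPML d k) ((-1) ^ k * (k + 1) * (k + 2) / d ^ (k + 1) * ω * (ω - d) ^ k) ω := by
  refine (hasDerivAt_mul_sub_pow_succ_mul_add_add ((-1) ^ k * (k + 1) / d ^ (k + 1)) d
    (d / (k + 1)) d k ω).congr_deriv ?_
  rw [mul_add (_ + 1 : ℝ), mul_div_cancel₀ _ (by positivity)]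
  ring

theorem hasDerivAt_gPMR (d : ℝ) (k : ℕ) (ω : ℝ) :
    HasDerivAt (gPMR d k) (-(k + 1) * (k + 2) / (1 - d) ^ (k + 1) * (ω - 1) * (ω - d) ^ k) ω := by
  refine (hasDerivAt_mul_sub_pow_succ_mul_add_add (-(k + 1) / (1 - d) ^ (k + 1)) d
    ((d - (k + 2)) / (k + 1)) d k ω).congr_deriv ?_
  rw [mul_add (_ + 1 : ℝ), mul_div_cancel₀ _ (by positivity)]
  ring

theorem iteratedDeriv_gPML_eq_zero {d : ℝ} {k j : ℕ} (hj : 1 ≤ j) (hjk : j ≤ k) :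
    iteratedDeriv j (gPML d k) d = 0 :=
  iteratedDeriv_eq_zero_of_deriv_eq_eval
    (p := C ((-1) ^ k * (k + 1) * (k + 2) / d ^ (k + 1)) * X * (X - C d) ^ k)
    (funext fun ω => by simp [(hasDerivAt_gPML d k ω).deriv]) (dvd_mul_left _ _) hj hjk

theorem iteratedDeriv_gPMR_eq_zero {d : ℝ} {k j : ℕ} (hj : 1 ≤ j) (hjk : j ≤ k) :
    iteratedDeriv j (gPMR d k) d = 0 :=
  iteratedDeriv_eq_zero_of_deriv_eq_eval
    (p := C (-(k + 1) * (k + 2) / (1 - d) ^ (k + 1)) * (X - 1) * (X - C d) ^ k)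
    (funext fun ω => by simp [(hasDerivAt_gPMR d k ω).deriv]) (dvd_mul_left _ _) hj hjk

theorem contDiff_gPM (d : ℝ) (k : ℕ) : ContDiff ℝ k (gPM d k) :=
  contDiff_ite_le_of_eq_add_sub_pow_mul (by unfold gPML; fun_prop)
    (h := fun ω => -(k + 1) / (1 - d) ^ (k + 1) * (ω + (d - (k + 2)) / (k + 1))
      - (-1) ^ k * (k + 1) / d ^ (k + 1) * (ω + d / (k + 1)))
    (by fun_prop) (fun ω => by unfold gPML gPMR; ring)

theorem iteratedDeriv_gPM_eq_gPML {d : ℝ} {k j : ℕ} (hjk : j ≤ k) :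
    iteratedDeriv j (gPM d k) d = iteratedDeriv j (gPML d k) d :=
  iteratedDeriv_eq_of_eqOn (uniqueDiffOn_Iic d) self_mem_Iic
    ((contDiff_gPM d k).contDiffAt.of_le (by exact_mod_cast hjk))
    (by unfold gPML; fun_prop) fun _ hω => if_pos hω

theorem wenoPM_derivatives_general (d : ℝ) (k : ℕ) :
    ContDiffAt ℝ k (gPM d k) d ∧
    (∀ j : ℕ, 1 ≤ j → j ≤ k →
      iteratedDeriv j (gPM d k) d = 0 ∧
      iteratedDeriv j (gPML d k) d = 0 ∧ iteratedDeriv j (gPMR d k) d = 0) ∧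
    deriv (gPML d k) 0 = 0 ∧ deriv (gPMR d k) 1 = 0 := by
  refine ⟨(contDiff_gPM d k).contDiffAt, fun j hj hjk => ?_,
    by simp [(hasDerivAt_gPML d k 0).deriv], by simp [(hasDerivAt_gPMR d k 1).deriv]⟩
  rw [iteratedDeriv_gPM_eq_gPML hjk]
  exact ⟨iteratedDeriv_gPML_eq_zero hj hjk, iteratedDeriv_gPML_eq_zero hj hjk,
    iteratedDeriv_gPMR_eq_zero hj hjk⟩

/-- For every `d ∈ (0,1)` and integer `k ≥ 1`, the WENO-PMₖ mapping is `k` times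
differentiable at `ω = d` with `g⁽ʲ⁾(d) = 0` for `1 ≤ j ≤ k` (the one-sided derivatives
of orders `1` through `k` of both branches vanish at `d`); moreover the one-sided
derivatives at the endpoints satisfy `g′(0) = 0` and `g′(1) = 0`. -/
theorem wenoPM_derivatives (d : ℝ) (hd : d ∈ Set.Ioo (0 : ℝ) 1) (k : ℕ) (hk : 1 ≤ k) :
    ContDiffAt ℝ k (gPM d k) d ∧
    (∀ j : ℕ, 1 ≤ j → j ≤ k →
      iteratedDeriv j (gPM d k) d = 0 ∧
      iteratedDeriv j (gPML d k) d = 0 ∧ iteratedDeriv j (gPMR d k) d = 0) ∧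
    deriv (gPML d k) 0 = 0 ∧ deriv (gPMR d k) 1 = 0 :=
  wenoPM_derivatives_general d k
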